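/- arXiv:2304.08060 — 6 statements merged into one kernel-verified Lean document; each statement's English description precedes it below -/
import Mathlib

section
/- Let X_{n+1} = (X_n - δ_{n+1})₊ + β_{n+1} with (δ_n) i.i.d. shifted geometric(α) and (β_n) i.i.d. on ℕ₀ with p.g.f. φ_β, all independent. Then the p.g.f. Φ_{n+1}(z) = E(z^{X_{n+1}}) satisfies Φ_{n+1}(z) = φ_β(z)·[ ᾱ(1-z)/(ᾱ-z) · Φ_n(ᾱ) - αz/(ᾱ-z) · Φ_n(z) ] for z ≠ ᾱ. -/
/-!
Independence splits off the factor `φ_β(z)`. Given `X = k`, the variable `(k - δ)₊` has p.g.f.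
`∑ⱼ α ᾱ^j z^(k - j)₊`: the terms `j ≥ k` form a geometric tail summing to `ᾱ^k`, and the terms
`j < k` a finite geometric sum `α z (ᾱ^k - z^k) / (ᾱ - z)`. The result is an affine combination
of `ᾱ^k` and `z^k`, and averaging over the law of `X` turns these into `Φ_n(ᾱ)` and `Φ_n(z)`.
-/

open MeasureTheory ProbabilityTheory Finset

lemma tsum_geometric_mul_pow_tsub {α z : ℝ} (hα : |1 - α| < 1) (hz : z ≠ 1 - α) (k : ℕ) :
    ∑' j : ℕ, α * (1 - α) ^ j * z ^ (k - j) =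
      (1 - α) * (1 - z) / ((1 - α) - z) * (1 - α) ^ k - α * z / ((1 - α) - z) * z ^ k := by
  have htail : ∀ j, α * (1 - α) ^ (j + k) * z ^ (k - (j + k)) = α * (1 - α) ^ k * (1 - α) ^ j :=
    fun j => by rw [Nat.sub_eq_zero_of_le (Nat.le_add_left k j), pow_add]; ring
  have hsum : Summable fun j : ℕ => α * (1 - α) ^ j * z ^ (k - j) :=
    (summable_nat_add_iff k).mp <| by
      simp_rw [htail]; exact (summable_geometric_of_abs_lt_one hα).mul_left _
  have hhead : ∑ j ∈ range k, α * (1 - α) ^ j * z ^ (k - j) =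
      α * z * ∑ j ∈ range k, (1 - α) ^ j * z ^ (k - 1 - j) := by
    rw [mul_sum]
    refine sum_congr rfl fun j hj => ?_
    rw [show k - j = k - 1 - j + 1 by grind]
    ring
  have hgeom := geom_sum₂_mul (1 - α) z k
  have hne : (1 - α) - z ≠ 0 := sub_ne_zero.mpr hz.symm
  rw [← hsum.sum_add_tsum_nat_add k, tsum_congr htail, tsum_mul_left,
    tsum_geometric_of_abs_lt_one hα, sub_sub_cancel, hhead, ← div_eq_of_eq_mul hne hgeom.symm]
  have hα0 : α ≠ 0 := by rintro rfl; simp at hα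
  field_simp
  ring

lemma integrable_pow_comp {Ω : Type*} [MeasurableSpace Ω] {μ : Measure Ω} [IsFiniteMeasure μ]
    {N : Ω → ℕ} (hN : Measurable N) {z : ℝ} (hz : |z| ≤ 1) :
    Integrable (fun ω => z ^ N ω) μ :=
  .of_bound ((measurable_of_countable (z ^ ·)).comp hN).aestronglyMeasurable 1 <|
    ae_of_all _ fun ω => by simpa using pow_le_one₀ (abs_nonneg z) hz

lemma ProbabilityTheory.IndepFun.integral_comp_prodMk_eq_integral_integral
    {Ω 𝓧 𝓨 E : Type*} [MeasurableSpace Ω] [MeasurableSpace 𝓧] [MeasurableSpace 𝓨]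
    [NormedAddCommGroup E] [NormedSpace ℝ E]
    {μ : Measure Ω} [IsFiniteMeasure μ] {X : Ω → 𝓧} {Y : Ω → 𝓨} (hXY : IndepFun X Y μ)
    (hX : Measurable X) (hY : Measurable Y) {f : 𝓧 × 𝓨 → E} (hfm : StronglyMeasurable f)
    (hf : Integrable f ((μ.map X).prod (μ.map Y))) :
    ∫ ω, f (X ω, Y ω) ∂μ = ∫ ω, ∫ ω', f (X ω, Y ω') ∂μ ∂μ := by
  rw [← integral_map (hX.prodMk hY).aemeasurable hfm.aestronglyMeasurable,
    (indepFun_iff_map_prod_eq_prod_map_map hX.aemeasurable hY.aemeasurable).mp hXY,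
    integral_prod f hf, integral_map hX.aemeasurable hf.integral_prod_left.aestronglyMeasurable]
  refine integral_congr_ae (ae_of_all _ fun ω => ?_)
  exact integral_map hY.aemeasurable
    (hfm.comp_measurable measurable_prodMk_left).aestronglyMeasurable

lemma integral_pow_tsub_of_geometric {Ω : Type*} [MeasurableSpace Ω] {μ : Measure Ω}
    [IsFiniteMeasure μ] {α : ℝ} (hα0 : 0 < α) (hα1 : α ≤ 1) {δ : Ω → ℕ} (hδm : Measurable δ)
    (hδ : ∀ x : ℕ, μ {ω | δ ω = x} = ENNReal.ofReal (α * (1 - α) ^ x))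
    {z : ℝ} (hz : |z| ≤ 1) (hzα : z ≠ 1 - α) (k : ℕ) :
    ∫ ω, z ^ (k - δ ω) ∂μ =
      (1 - α) * (1 - z) / ((1 - α) - z) * (1 - α) ^ k - α * z / ((1 - α) - z) * z ^ k := by
  rw [← integral_map (f := fun j => z ^ (k - j)) hδm.aemeasurable
      (measurable_of_countable _).aestronglyMeasurable,
    integral_countable (integrable_pow_comp (measurable_of_countable (k - ·)) hz),
    ← tsum_geometric_mul_pow_tsub (abs_sub_lt_iff.mpr ⟨by linarith, by linarith⟩) hzα k]
  refine tsum_congr fun j => ?_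
  rw [map_measureReal_apply hδm (measurableSet_singleton j), measureReal_def]
  simp only [Set.preimage, Set.mem_singleton_iff, hδ, smul_eq_mul]
  rw [ENNReal.toReal_ofReal (by have := sub_nonneg.mpr hα1; positivity)]

/-- Recurrence for the p.g.f. of the chain `X_{n+1} = (X_n - δ_{n+1})₊ + β_{n+1}` with
`δ` shifted geometric(α): for `z ≠ ᾱ`,
`Φ_{n+1}(z) = φ_β(z) [ ᾱ(1-z)/(ᾱ-z) Φ_n(ᾱ) - αz/(ᾱ-z) Φ_n(z) ]`. -/
theorem stmt5 {Ω : Type*} [MeasurableSpace Ω] (μ : Measure Ω) [IsProbabilityMeasure μ]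
    (α : ℝ) (hα0 : 0 < α) (hα1 : α < 1) (X δ β : Ω → ℕ)
    (hmX : Measurable X) (hmδ : Measurable δ) (hmβ : Measurable β)
    (hδ : ∀ x : ℕ, μ {ω | δ ω = x} = ENNReal.ofReal (α * (1 - α) ^ x))
    (hindep : iIndepFun ![X, δ, β] μ) :
    ∀ z : ℝ, |z| ≤ 1 → z ≠ 1 - α →
      ∫ ω, z ^ ((X ω - δ ω) + β ω) ∂μ =
        (∫ ω, z ^ β ω ∂μ) *
          ((1 - α) * (1 - z) / ((1 - α) - z) * (∫ ω, (1 - α) ^ X ω ∂μ)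
            - α * z / ((1 - α) - z) * (∫ ω, z ^ X ω ∂μ)) := by
  intro z hz hzα
  have hmeas : ∀ i, Measurable (![X, δ, β] i) := by
    intro i; fin_cases i <;> assumption
  have hXδ : IndepFun X δ μ := by simpa using hindep.indepFun (i := 0) (j := 1) (by decide)
  have hXδβ : IndepFun (fun ω => (X ω, δ ω)) β μ := by
    simpa using hindep.indepFun_prodMk hmeas 0 1 2 (by decide) (by decide)
  have hα : |1 - α| ≤ 1 := abs_le.mpr ⟨by linarith, by linarith⟩
  calc ∫ ω, z ^ ((X ω - δ ω) + β ω) ∂μ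
      = (∫ ω, z ^ (X ω - δ ω) ∂μ) * ∫ ω, z ^ β ω ∂μ := by
        simp_rw [pow_add]
        exact hXδβ.integral_fun_comp_mul_comp (f := fun p : ℕ × ℕ => z ^ (p.1 - p.2))
          (hmX.prodMk hmδ).aemeasurable hmβ.aemeasurable
          (measurable_of_countable _).aestronglyMeasurable
          (measurable_of_countable _).aestronglyMeasurable
    _ = (∫ ω, ∫ ω', z ^ (X ω - δ ω') ∂μ ∂μ) * ∫ ω, z ^ β ω ∂μ := by
        rw [hXδ.integral_comp_prodMk_eq_integral_integral (f := fun p : ℕ × ℕ => z ^ (p.1 - p.2))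
          hmX hmδ (measurable_of_countable _).stronglyMeasurable
          (integrable_pow_comp (measurable_of_countable _) hz)]
    _ = (∫ ω, ((1 - α) * (1 - z) / ((1 - α) - z) * (1 - α) ^ X ω
            - α * z / ((1 - α) - z) * z ^ X ω) ∂μ) * ∫ ω, z ^ β ω ∂μ := by
        simp_rw [integral_pow_tsub_of_geometric hα0 hα1.le hmδ hδ hz hzα]
    _ = _ := by
        rw [integral_sub ((integrable_pow_comp hmX hα).const_mul _)
          ((integrable_pow_comp hmX hz).const_mul _), integral_const_mul, integral_const_mul]
        ring
end

section
/- Under μ_β < μ_δ, the stationary p.g.f. satisfies Φ_∞(ᾱ) = 1 - μ_β/μ_δ, and in particular the stationary probability of state 0 is π(0) = b₀(1 - μ_β/μ_δ), where b₀ = P(β = 0). -/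
set_option maxHeartbeats 1000000 in

lemma stmt7_key (b : ℕ → ℝ) (hbnn : ∀ n, 0 ≤ b n) (hbsum : HasSum b 1)
    (z : ℝ) (hz0 : 0 ≤ z) (hz1 : z < 1) :
    (1 - z) * (∑' n : ℕ, (∑' k : ℕ, b (n + k)) * z ^ n)
      = 1 - z * ∑' n : ℕ, b n * z ^ n := by
  set T : ℕ → ℝ := fun n => ∑' k, b (n + k) with hT
  have hTsummable : ∀ n, Summable (fun k => b (n + k)) := by
    intro n
    have := (summable_nat_add_iff n).2 hbsum.summable
    simpa [add_comm] using this
  have hTnn : ∀ n, 0 ≤ T n := fun n => tsum_nonneg (fun k => hbnn _)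
  have hT1 : ∀ n, T n ≤ 1 := by
    intro n
    have h := Summable.sum_add_tsum_nat_add (f := b) n hbsum.summable
    rw [hbsum.tsum_eq] at h
    have hTe : T n = ∑' k, b (k + n) := by
      simp only [hT]; exact tsum_congr (fun k => by rw [add_comm])
    have hnn : 0 ≤ ∑ i ∈ Finset.range n, b i := Finset.sum_nonneg (fun i _ => hbnn i)
    linarith [h, hTe]
  have hbz : Summable (fun n : ℕ => b n * z ^ n) := by
    apply Summable.of_nonneg_of_le (fun n => mul_nonneg (hbnn n) (pow_nonneg hz0 n))
      (fun n => ?_) hbsum.summable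
    calc b n * z ^ n ≤ b n * 1 := by
          apply mul_le_mul_of_nonneg_left _ (hbnn n)
          exact pow_le_one₀ hz0 hz1.le
      _ = b n := mul_one _
  have hTz : Summable (fun n : ℕ => T n * z ^ n) := by
    apply Summable.of_nonneg_of_le (fun n => mul_nonneg (hTnn n) (pow_nonneg hz0 n))
      (fun n => ?_) (summable_geometric_of_lt_one hz0 hz1)
    calc T n * z ^ n ≤ 1 * z ^ n :=
          mul_le_mul_of_nonneg_right (hT1 n) (pow_nonneg hz0 n)
      _ = z ^ n := one_mul _
  have hrec : ∀ n, T n = b n + T (n + 1) := by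
    intro n
    have h := Summable.tsum_eq_zero_add (hTsummable n)
    simp only [add_zero] at h
    rw [hT]
    simp only
    rw [h]
    congr 1
    exact tsum_congr (fun k => by ring_nf)
  have hT0eq : T 0 = 1 := by
    have : T 0 = ∑' k, b k := tsum_congr (fun k => by rw [zero_add])
    rw [this, hbsum.tsum_eq]
  -- summability of shifted series
  have hTz1 : Summable (fun n : ℕ => T (n + 1) * z ^ (n + 1)) :=
    (summable_nat_add_iff 1).2 hTz
  have hTz1' : Summable (fun n : ℕ => T n * z ^ (n + 1)) := by
    have : (fun n : ℕ => T n * z ^ (n + 1)) = fun n => z * (T n * z ^ n) := by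
      funext n; ring
    rw [this]; exact hTz.mul_left z
  have hshift : ∑' n, T n * z ^ n = T 0 + ∑' n, T (n + 1) * z ^ (n + 1) := by
    simpa using Summable.tsum_eq_zero_add hTz
  have hmul : z * ∑' n, T n * z ^ n = ∑' n, T n * z ^ (n + 1) := by
    rw [← tsum_mul_left]
    exact tsum_congr (fun n => by ring)
  have hdiff : ∑' n, (T (n + 1) * z ^ (n + 1) - T n * z ^ (n + 1))
      = -(z * ∑' n, b n * z ^ n) := by
    have heq : (fun n : ℕ => T (n + 1) * z ^ (n + 1) - T n * z ^ (n + 1))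
        = fun n : ℕ => -(z * (b n * z ^ n)) := by
      funext n
      have := hrec n
      have hzn : z ^ (n + 1) = z * z ^ n := by ring
      rw [hzn, this]
      ring
    rw [heq, tsum_neg, tsum_mul_left]
  have key : (1 - z) * (∑' n, T n * z ^ n) = 1 - z * ∑' n, b n * z ^ n := by
    have expand : (1 - z) * (∑' n, T n * z ^ n)
        = (∑' n, T n * z ^ n) - z * (∑' n, T n * z ^ n) := by ring
    rw [expand, hmul, hshift]
    have hsub : (T 0 + ∑' n, T (n + 1) * z ^ (n + 1)) - ∑' n, T n * z ^ (n + 1)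
        = T 0 + ∑' n, (T (n + 1) * z ^ (n + 1) - T n * z ^ (n + 1)) := by
      rw [Summable.tsum_sub hTz1 hTz1']; ring
    rw [hsub, hdiff, hT0eq]; ring
  exact key

/-- Under `μ_β < μ_δ = ᾱ/α`, the stationary p.g.f.
`Φ_∞(z) = φ_β(z)(1 - αφ̄_β(1))/(1 - αφ̄_β(z))` satisfies `Φ_∞(ᾱ) = 1 - μ_β/μ_δ`
and the stationary probability of state 0 is `Φ_∞(0) = b₀(1 - μ_β/μ_δ)`. -/
theorem stmt7 (α : ℝ) (hα0 : 0 < α) (hα1 : α < 1)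
    (b : ℕ → ℝ) (hbnn : ∀ n, 0 ≤ b n) (hbsum : HasSum b 1)
    (hb00 : 0 < b 0) (hb01 : b 0 < 1)
    (μβ : ℝ) (hμβ : HasSum (fun n : ℕ => (n : ℝ) * b n) μβ)
    (hsub : μβ < (1 - α) / α)
    (φβ φbar Φ : ℝ → ℝ)
    (hφβ : ∀ z, φβ z = ∑' n : ℕ, b n * z ^ n)
    (hφbar : ∀ z, φbar z = ∑' n : ℕ, (∑' k : ℕ, b (n + k)) * z ^ n)
    (hΦ : ∀ z, Φ z = φβ z * (1 - α * (1 + μβ)) / (1 - α * φbar z)) :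
    Φ (1 - α) = 1 - μβ / ((1 - α) / α) ∧
    Φ 0 = b 0 * (1 - μβ / ((1 - α) / α)) := by
  have hz0 : (0:ℝ) < 1 - α := by linarith
  have hz1 : 1 - α < 1 := by linarith
  have hbz : Summable (fun n : ℕ => b n * (1 - α) ^ n) := by
    apply Summable.of_nonneg_of_le (fun n => mul_nonneg (hbnn n) (pow_nonneg hz0.le n))
      (fun n => ?_) hbsum.summable
    calc b n * (1 - α) ^ n ≤ b n * 1 := by
          apply mul_le_mul_of_nonneg_left _ (hbnn n)
          exact pow_le_one₀ hz0.le hz1.le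
      _ = b n := mul_one _
  -- φβ (1-α) > 0
  have hφβpos : 0 < φβ (1 - α) := by
    rw [hφβ]
    have h0 : b 0 * (1 - α) ^ 0 ≤ ∑' n, b n * (1 - α) ^ n :=
      Summable.le_tsum hbz 0 (fun i _ => mul_nonneg (hbnn i) (pow_nonneg hz0.le i))
    simp only [pow_zero, mul_one] at h0
    linarith
  -- key identity at z = 1 - α
  have hkey := stmt7_key b hbnn hbsum (1 - α) hz0.le hz1
  have hkey' : α * φbar (1 - α) = 1 - (1 - α) * φβ (1 - α) := by
    rw [hφbar, hφβ]
    linear_combination hkey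
  have hdenom : 1 - α * φbar (1 - α) = (1 - α) * φβ (1 - α) := by
    rw [hkey']; ring
  have hφne : φβ (1 - α) ≠ 0 := ne_of_gt hφβpos
  have hzne : (1 - α) ≠ 0 := ne_of_gt hz0
  have hαne : α ≠ 0 := ne_of_gt hα0
  have h1 : Φ (1 - α) = 1 - μβ / ((1 - α) / α) := by
    rw [hΦ, hdenom]
    field_simp
    ring
  -- Φ 0
  have hφβ0 : φβ 0 = b 0 := by
    rw [hφβ]
    rw [tsum_eq_single 0 (fun n hn => by simp [zero_pow hn])]
    simp
  have hT0eq : (∑' k : ℕ, b (0 + k)) = 1 := by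
    have : (∑' k : ℕ, b (0 + k)) = ∑' k, b k := tsum_congr (fun k => by rw [zero_add])
    rw [this, hbsum.tsum_eq]
  have hφbar0 : φbar 0 = 1 := by
    rw [hφbar]
    rw [tsum_eq_single 0 (fun n hn => by simp [zero_pow hn])]
    simpa using hT0eq
  have h2 : Φ 0 = b 0 * (1 - μβ / ((1 - α) / α)) := by
    have hsc : (1 - α * (1 + μβ)) / (1 - α) = 1 - μβ / ((1 - α) / α) := by
      field_simp
      ring
    rw [hΦ, hφβ0, hφbar0, mul_one, mul_div_assoc, hsc]
  exact ⟨h1, h2⟩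
end

section
/- If μ_β = μ_δ (null-recurrent/critical case) or μ_β > μ_δ (transient case), then the chain X_{n+1} = (X_n - δ_{n+1})₊ + β_{n+1} admits no nontrivial invariant probability measure: any invariant measure solving the stationarity equation must satisfy π(0) = b₀(1 - μ_β/μ_δ) ≤ 0, forcing π ≡ 0. -/
/-!
With `Φ(z) = ∑ π x z^x`, `q(z) = ∑ b j z^j` and `ᾱ = 1 - α`, stationarity turns into the functional
equation `(z - ᾱ) Φ(z) = q(z) (α z Φ(z) - ᾱ (1 - z) Φ(ᾱ))`, because the row `x` of `P` has
generating function `q(z) E[z^(x-δ)₊]` and `(z - ᾱ) E[z^(x-δ)₊] = α z^(x+1) - ᾱ^(x+1) (1 - z)`.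
Dividing by `1 - z` and bounding `(1 - z q(z)) / (1 - z) ≥ ∑ (k+1) b k z^k` gives, as `z → 1⁻`
(Abel's theorem), `α (1 + μβ) + ᾱ Φ(ᾱ) ≤ 1`. Since `α (1 + μβ) ≥ 1`, this forces `Φ(ᾱ) ≤ 0`,
i.e. `π = 0`, contradicting `∑ π x = 1`.
-/

theorem hasSum_tsum_swap_of_nonneg {ι κ : Type*} {f : ι → κ → ℝ} (hf : ∀ i j, 0 ≤ f i j)
    {r : ι → ℝ} {a : ℝ} (hrow : ∀ i, HasSum (f i) (r i)) (hr : HasSum r a) :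
    HasSum (fun j => ∑' i, f i j) a := by
  have hs : Summable (Function.uncurry f) :=
    (summable_prod_of_nonneg fun p => hf p.1 p.2).2
      ⟨fun i => (hrow i).summable, by simpa only [(hrow _).tsum_eq] using hr.summable⟩
  have htot : HasSum (Function.uncurry f) a := by
    simpa only [hr.unique (hs.hasSum.prod_fiberwise hrow)] using hs.hasSum
  exact ((Equiv.prodComm κ ι).hasSum_iff.2 htot).prod_fiberwise
    fun j => (hs.prod_symm.prod_factor j).hasSum

theorem summable_mul_pow_of_nonneg {ι : Type*} {f : ι → ℝ} (hf : ∀ i, 0 ≤ f i) (hfs : Summable f)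
    (e : ι → ℕ) {z : ℝ} (hz0 : 0 ≤ z) (hz1 : z ≤ 1) :
    Summable fun i => f i * z ^ e i :=
  hfs.of_nonneg_of_le (fun i => mul_nonneg (hf i) (pow_nonneg hz0 _))
    fun i => mul_le_of_le_one_right (hf i) (pow_le_one₀ hz0 hz1)

theorem tsum_mul_pow_le_tsum {ι : Type*} {f : ι → ℝ} (hf : ∀ i, 0 ≤ f i) (hfs : Summable f)
    (e : ι → ℕ) {z : ℝ} (hz0 : 0 ≤ z) (hz1 : z ≤ 1) :
    ∑' i, f i * z ^ e i ≤ ∑' i, f i :=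
  (summable_mul_pow_of_nonneg hf hfs e hz0 hz1).tsum_le_tsum
    (fun i => mul_le_of_le_one_right (hf i) (pow_le_one₀ hz0 hz1)) hfs

theorem hasSum_shift_mul_pow (b : ℕ → ℝ) {z q : ℝ} (hq : HasSum (fun j => b j * z ^ j) q) (k : ℕ) :
    HasSum (fun y => (if k ≤ y then b (y - k) else 0) * z ^ y) (z ^ k * q) := by
  rw [← (add_right_injective k).hasSum_iff fun y hy => by
    rw [if_neg fun h => hy ⟨y - k, Nat.add_sub_cancel' h⟩, zero_mul]]
  convert hq.mul_left (z ^ k) using 1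
  · rfl
  funext j
  simp only [Function.comp_apply, Nat.le_add_right, if_true, Nat.add_sub_cancel_left, pow_add]
  ring

theorem hasSum_tsum_mixture_shift_mul_pow {ι : Type*} {w : ι → ℝ} (hw : ∀ d, 0 ≤ w d)
    (hws : Summable w) (s : ι → ℕ) {b : ℕ → ℝ} (hb : ∀ n, 0 ≤ b n) {z q : ℝ} (hz0 : 0 ≤ z)
    (hz1 : z ≤ 1) (hq : HasSum (fun j => b j * z ^ j) q) :
    HasSum (fun y => (∑' d, w d * if s d ≤ y then b (y - s d) else 0) * z ^ y)
      ((∑' d, w d * z ^ s d) * q) := by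
  have h := hasSum_tsum_swap_of_nonneg
    (f := fun d y => w d * (if s d ≤ y then b (y - s d) else 0) * z ^ y)
    (fun d y => mul_nonneg (mul_nonneg (hw d) (ite_nonneg (hb _) le_rfl)) (pow_nonneg hz0 y))
    (fun d => by simpa only [mul_assoc] using (hasSum_shift_mul_pow b hq (s d)).mul_left (w d))
    ((summable_mul_pow_of_nonneg hw hws s hz0 hz1).hasSum.mul_right q)
  simpa only [tsum_mul_right] using h

theorem hasSum_mul_one_sub_pow {α : ℝ} (hα0 : 0 < α) (hα1 : α < 1) :
    HasSum (fun d : ℕ => α * (1 - α) ^ d) 1 := by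
  have h := (hasSum_geometric_of_lt_one (by linarith) (by linarith : 1 - α < 1)).mul_left α
  rwa [sub_sub_cancel, mul_inv_cancel₀ hα0.ne'] at h

theorem sub_mul_tsum_geometric_mul_pow_sub {α z : ℝ} (hα0 : 0 < α) (hα1 : α < 1) (hz0 : 0 ≤ z)
    (hz1 : z ≤ 1) (x : ℕ) :
    (z - (1 - α)) * ∑' d : ℕ, α * (1 - α) ^ d * z ^ (x - d)
      = α * z ^ (x + 1) - (1 - α) ^ (x + 1) * (1 - z) := by
  induction x with
  | zero =>
    simp only [zero_tsub, pow_zero, mul_one, (hasSum_mul_one_sub_pow hα0 hα1).tsum_eq, zero_add,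
      pow_one]
    ring
  | succ x ih =>
    have hs := summable_mul_pow_of_nonneg (fun d => mul_nonneg hα0.le (pow_nonneg (by linarith) d))
      (hasSum_mul_one_sub_pow hα0 hα1).summable (fun d => x + 1 - d) hz0 hz1
    have hshift : ∑' d : ℕ, α * (1 - α) ^ (d + 1) * z ^ (x + 1 - (d + 1))
        = (1 - α) * ∑' d : ℕ, α * (1 - α) ^ d * z ^ (x - d) := by
      rw [← tsum_mul_left]
      congr 1 with d
      rw [Nat.add_sub_add_right, pow_succ]
      ring
    rw [hs.tsum_eq_zero_add, hshift, pow_zero, mul_one, Nat.sub_zero]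
    linear_combination (1 - α) * ih

theorem hasSum_mul_pow_of_stationary {π : ℕ → ℝ} {P : ℕ → ℕ → ℝ} {g : ℕ → ℝ} {z : ℝ}
    (hπ : ∀ x, 0 ≤ π x) (hP : ∀ x y, 0 ≤ P x y) (hz : 0 ≤ z)
    (hstat : ∀ y, ∑' x, π x * P x y = π y) (hrow : ∀ x, HasSum (fun y => P x y * z ^ y) (g x))
    (hg : Summable fun x => π x * g x) :
    HasSum (fun y => π y * z ^ y) (∑' x, π x * g x) := by
  have h := hasSum_tsum_swap_of_nonneg (f := fun x y => π x * (P x y * z ^ y))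
    (fun x y => mul_nonneg (hπ x) (mul_nonneg (hP x y) (pow_nonneg hz y)))
    (fun x => (hrow x).mul_left (π x)) hg.hasSum
  simpa only [← mul_assoc, tsum_mul_right, hstat] using h

theorem one_sub_mul_succ_mul_pow_le {z : ℝ} (hz0 : 0 ≤ z) (hz1 : z ≤ 1) (k : ℕ) :
    (1 - z) * ((k + 1) * z ^ k) ≤ 1 - z ^ (k + 1) := by
  induction k with
  | zero => simp
  | succ k ih =>
    have hpow : z ^ (k + 1) ≤ z ^ k := pow_le_pow_of_le_one hz0 hz1 k.le_succ
    push_cast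
    nlinarith [pow_succ z (k + 1), mul_nonneg (mul_nonneg (sub_nonneg.2 hz1) k.cast_add_one_pos.le)
      (sub_nonneg.2 hpow)]

theorem one_sub_mul_tsum_succ_mul_pow_le {b : ℕ → ℝ} (hb : ∀ n, 0 ≤ b n) (hbsum : HasSum b 1)
    (hψ : Summable fun k : ℕ => ((k : ℝ) + 1) * b k) {z : ℝ} (hz0 : 0 ≤ z) (hz1 : z ≤ 1) :
    (1 - z) * ∑' k : ℕ, ((k : ℝ) + 1) * b k * z ^ k ≤ 1 - z * ∑' k, b k * z ^ k := by
  have hs := summable_mul_pow_of_nonneg (fun k => mul_nonneg k.cast_add_one_pos.le (hb k)) hψ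
    (fun k => k) hz0 hz1
  have hq := (summable_mul_pow_of_nonneg hb hbsum.summable (fun k => k) hz0 hz1).mul_left z
  calc (1 - z) * ∑' k : ℕ, ((k : ℝ) + 1) * b k * z ^ k
        = ∑' k : ℕ, (1 - z) * (((k : ℝ) + 1) * b k * z ^ k) := tsum_mul_left.symm
    _ ≤ ∑' k, (b k - z * (b k * z ^ k)) :=
        (hs.mul_left _).tsum_le_tsum (fun k => ?_) (hbsum.summable.sub hq)
    _ = 1 - z * ∑' k, b k * z ^ k := by
        rw [hbsum.summable.tsum_sub hq, hbsum.tsum_eq, tsum_mul_left]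
  have h := mul_le_mul_of_nonneg_left (one_sub_mul_succ_mul_pow_le hz0 hz1 k) (hb k)
  rw [pow_succ] at h
  linarith

section GeometricDecrements

variable {α : ℝ} {b : ℕ → ℝ} {π : ℕ → ℝ} {P : ℕ → ℕ → ℝ} {z : ℝ}

theorem sub_mul_tsum_mul_pow_of_stationary (hα0 : 0 < α) (hα1 : α < 1) (hb : ∀ n, 0 ≤ b n)
    (hbs : Summable b) (hπ : ∀ x, 0 ≤ π x) (hπs : Summable π)
    (hP : ∀ x y, P x y =
      ∑' d : ℕ, α * (1 - α) ^ d * (if x - d ≤ y then b (y - (x - d)) else 0))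
    (hstat : ∀ y, ∑' x, π x * P x y = π y) (hz0 : 0 ≤ z) (hz1 : z ≤ 1) :
    (z - (1 - α)) * ∑' x, π x * z ^ x
      = (∑' j, b j * z ^ j) * (α * z * ∑' x, π x * z ^ x
          - (1 - α) * (1 - z) * ∑' x, π x * (1 - α) ^ x) := by
  set q := ∑' j, b j * z ^ j
  set A := fun x : ℕ => ∑' d : ℕ, α * (1 - α) ^ d * z ^ (x - d)
  have hw : ∀ d : ℕ, 0 ≤ α * (1 - α) ^ d := fun d => mul_nonneg hα0.le (pow_nonneg (by linarith) d)
  have hws := hasSum_mul_one_sub_pow hα0 hα1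
  have hq0 : 0 ≤ q := tsum_nonneg fun j => mul_nonneg (hb j) (pow_nonneg hz0 j)
  have hq : HasSum (fun j => b j * z ^ j) q :=
    (summable_mul_pow_of_nonneg hb hbs (fun j => j) hz0 hz1).hasSum
  have hrow : ∀ x, HasSum (fun y => P x y * z ^ y) (A x * q) := fun x => by
    simpa only [hP] using
      hasSum_tsum_mixture_shift_mul_pow hw hws.summable (fun d => x - d) hb hz0 hz1 hq
  have hA : ∀ x, 0 ≤ A x ∧ A x ≤ 1 := fun x =>
    ⟨tsum_nonneg fun d => mul_nonneg (hw d) (pow_nonneg hz0 _),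
      hws.tsum_eq ▸ tsum_mul_pow_le_tsum hw hws.summable _ hz0 hz1⟩
  have hPnn : ∀ x y, 0 ≤ P x y := fun x y => by
    rw [hP]
    exact tsum_nonneg fun d => mul_nonneg (hw d) (ite_nonneg (hb _) le_rfl)
  have hgen := hasSum_mul_pow_of_stationary hπ hPnn hz0 hstat hrow
    ((hπs.mul_right q).of_nonneg_of_le (fun x => mul_nonneg (hπ x) (mul_nonneg (hA x).1 hq0))
      fun x => mul_le_mul_of_nonneg_left (mul_le_of_le_one_left hq0 (hA x).2) (hπ x))
  have hterm : ∀ x, (z - (1 - α)) * (π x * (A x * q))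
      = q * (α * z * (π x * z ^ x) - (1 - α) * (1 - z) * (π x * (1 - α) ^ x)) := fun x => by
    linear_combination (π x * q) * sub_mul_tsum_geometric_mul_pow_sub hα0 hα1 hz0 hz1 x
  have hΦ := fun {t : ℝ} (ht0 : 0 ≤ t) (ht1 : t ≤ 1) =>
    summable_mul_pow_of_nonneg hπ hπs (fun x => x) ht0 ht1
  calc (z - (1 - α)) * ∑' x, π x * z ^ x = ∑' x, (z - (1 - α)) * (π x * (A x * q)) := by
        rw [hgen.tsum_eq, tsum_mul_left]
    _ = ∑' x, q * (α * z * (π x * z ^ x) - (1 - α) * (1 - z) * (π x * (1 - α) ^ x)) :=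
        tsum_congr hterm
    _ = _ := by
      rw [tsum_mul_left, ((hΦ hz0 hz1).mul_left _).tsum_sub
        ((hΦ (by linarith) (by linarith)).mul_left _), tsum_mul_left, tsum_mul_left]

theorem add_le_tsum_mul_pow_of_stationary (hα0 : 0 < α) (hα1 : α < 1)
    (hb : ∀ n, 0 ≤ b n) (hbsum : HasSum b 1) (hψ : Summable fun k : ℕ => ((k : ℝ) + 1) * b k)
    (hπ : ∀ x, 0 ≤ π x) (hπs : Summable π)
    (hP : ∀ x y, P x y =
      ∑' d : ℕ, α * (1 - α) ^ d * (if x - d ≤ y then b (y - (x - d)) else 0))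
    (hstat : ∀ y, ∑' x, π x * P x y = π y) (hz0 : 0 < z) (hz1 : z < 1) :
    α * (∑' k : ℕ, ((k : ℝ) + 1) * b k * z ^ k) * (∑' x, π x * z ^ x)
        + (1 - α) * (∑' j, b j * z ^ j) * ∑' x, π x * (1 - α) ^ x
      ≤ ∑' x, π x * z ^ x := by
  have hfe := sub_mul_tsum_mul_pow_of_stationary hα0 hα1 hb hbsum.summable hπ hπs hP hstat
    hz0.le hz1.le
  have hlow := one_sub_mul_tsum_succ_mul_pow_le hb hbsum hψ hz0.le hz1.le
  have hΦ : 0 ≤ ∑' x, π x * z ^ x := tsum_nonneg fun x => mul_nonneg (hπ x) (pow_nonneg hz0.le x)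
  refine le_of_mul_le_mul_left ?_ (sub_pos.2 hz1)
  nlinarith [mul_le_mul_of_nonneg_left hlow (mul_nonneg hα0.le hΦ)]

end GeometricDecrements

theorem stmt9_general (α : ℝ) (hα0 : 0 < α) (hα1 : α < 1)
    (b : ℕ → ℝ) (hbnn : ∀ n, 0 ≤ b n) (hbsum : HasSum b 1)
    (μβ : ℝ) (hμβ : HasSum (fun n : ℕ => (n : ℝ) * b n) μβ)
    (hcrit : (1 - α) / α ≤ μβ)
    (P : ℕ → ℕ → ℝ)
    (hP : ∀ x y, P x y =
      ∑' d : ℕ, α * (1 - α) ^ d * (if x - d ≤ y then b (y - (x - d)) else 0)) :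
    ¬ ∃ π : ℕ → ℝ, (∀ x, 0 ≤ π x) ∧ HasSum π 1 ∧
        ∀ y : ℕ, (∑' x : ℕ, π x * P x y) = π y := by
  rintro ⟨π, hπ, hπsum, hstat⟩
  have hψ : HasSum (fun k : ℕ => ((k : ℝ) + 1) * b k) (μβ + 1) := by
    simpa only [add_mul, one_mul] using hμβ.add hbsum
  obtain ⟨x, hx⟩ : ∃ x, π x ≠ 0 := by
    by_contra! h
    rw [show π = 0 from funext h] at hπsum
    exact one_ne_zero (hπsum.unique hasSum_zero)
  have hΦα : 0 < ∑' x, π x * (1 - α) ^ x :=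
    (summable_mul_pow_of_nonneg hπ hπsum.summable (fun x => x) (by linarith) (by linarith)).tsum_pos
      (fun x => mul_nonneg (hπ x) (pow_nonneg (by linarith) x)) x
      (mul_pos ((hπ x).lt_of_ne' hx) (pow_pos (by linarith) x))
  have hlim : α * (μβ + 1) * 1 + (1 - α) * 1 * ∑' x, π x * (1 - α) ^ x ≤ 1 := by
    have abel := fun {f : ℕ → ℝ} {l : ℝ} (h : HasSum f l) =>
      Real.tendsto_tsum_powerSeries_nhdsWithin_lt h.tendsto_sum_nat
    refine le_of_tendsto_of_tendsto
      ((((abel hψ).const_mul α).mul (abel hπsum)).add (((abel hbsum).const_mul _).mul_const _))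
      (abel hπsum) ?_
    filter_upwards [Ioo_mem_nhdsLT one_pos] with z hz
    exact add_le_tsum_mul_pow_of_stationary hα0 hα1 hbnn hbsum hψ.summable hπ
      hπsum.summable hP hstat hz.1 hz.2
  rw [div_le_iff₀ hα0] at hcrit
  nlinarith [mul_pos (sub_pos.2 hα1) hΦα]

/-- If `μ_β ≥ μ_δ = ᾱ/α` (null-recurrent or transient case), the chain
`X_{n+1} = (X_n - δ_{n+1})₊ + β_{n+1}` (with transition matrix
`P(x,y) = Σ_d α ᾱ^d · b_{y-(x-d)₊}`) admits no invariant probability measure. -/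
theorem stmt9 (α : ℝ) (hα0 : 0 < α) (hα1 : α < 1)
    (b : ℕ → ℝ) (hbnn : ∀ n, 0 ≤ b n) (hbsum : HasSum b 1)
    (hb00 : 0 < b 0) (hb01 : b 0 < 1)
    (μβ : ℝ) (hμβ : HasSum (fun n : ℕ => (n : ℝ) * b n) μβ)
    (hcrit : (1 - α) / α ≤ μβ)
    (P : ℕ → ℕ → ℝ)
    (hP : ∀ x y, P x y =
      ∑' d : ℕ, α * (1 - α) ^ d * (if x - d ≤ y then b (y - (x - d)) else 0)) :
    ¬ ∃ π : ℕ → ℝ, (∀ x, 0 ≤ π x) ∧ HasSum π 1 ∧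
        ∀ y : ℕ, (∑' x : ℕ, π x * P x y) = π y :=
  stmt9_general α hα0 hα1 b hbnn hbsum μβ hμβ hcrit P hP
end

section
/- Define u(z) = (z - ᾱ)/(αz·φ_β(z)) on [ᾱ, 1]. If μ_β ≤ μ_δ = ᾱ/α, then u is strictly increasing on [ᾱ,1] with u(ᾱ) = 0, u(1) = 1, and u'(1) = μ_δ - μ_β ≥ 0; hence u admits a well-defined inverse z(u) mapping [0,1] to [ᾱ,1]. -/
/-!
Write `φ(z) = 1 + (z - 1) ψ(z)` with `ψ(z) = ∑ bₙ (1 + z + ⋯ + zⁿ⁻¹)`. The terms of `ψ` are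
bounded by `n bₙ` on `[-1, 1]`, so `ψ` is continuous there with `ψ(1) = μ_β`; this gives
`φ'(1) = μ_β` at the boundary point `1`, where the power series cannot be differentiated termwise.

Inside `(ᾱ, 1)` the sign of `u'(z)` is that of `ᾱ φ(z) - z (z - ᾱ) φ'(z)`. Bernoulli's inequality
gives `φ(z) ≥ 1 - (1 - z) μ_β`, and `φ'(z) ≤ μ_β`, so this is at least
`ᾱ - μ_β ((z - ᾱ)² + α ᾱ) > ᾱ - α μ_β ≥ 0`, because `(z - ᾱ)² < α²`.
-/

open Set Finset

theorem hasDerivWithinAt_of_sub_eq_mul {𝕜 : Type*} [NontriviallyNormedField 𝕜] {f g : 𝕜 → 𝕜}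
    {s : Set 𝕜} {a : 𝕜} (hfg : ∀ z ∈ s, f z - f a = (z - a) * g z)
    (hg : ContinuousWithinAt g s a) : HasDerivWithinAt f (g a) s a := by
  rw [hasDerivWithinAt_iff_tendsto_slope]
  refine (hg.mono_left (nhdsWithin_mono a sdiff_subset)).congr' ?_
  filter_upwards [self_mem_nhdsWithin] with z ⟨hzs, hza⟩
  rw [slope_def_field, hfg z hzs, mul_div_cancel_left₀ _ (sub_ne_zero.2 hza)]

theorem norm_mul_pow_le {c z : ℝ} (hc : 0 ≤ c) (hz : |z| ≤ 1) (n : ℕ) : ‖c * z ^ n‖ ≤ c := by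
  rw [norm_mul, norm_pow, Real.norm_eq_abs, Real.norm_eq_abs, abs_of_nonneg hc]
  exact mul_le_of_le_one_right hc (pow_le_one₀ (abs_nonneg z) hz)

theorem norm_mul_geom_sum_le {c z : ℝ} (hc : 0 ≤ c) (hz : |z| ≤ 1) (n : ℕ) :
    ‖c * ∑ i ∈ range n, z ^ i‖ ≤ n * c := by
  rw [norm_mul, Real.norm_of_nonneg hc, mul_comm]
  gcongr
  calc ‖∑ i ∈ range n, z ^ i‖ ≤ ∑ i ∈ range n, ‖z ^ i‖ := norm_sum_le _ _
    _ ≤ ∑ _i ∈ range n, (1 : ℝ) := sum_le_sum fun i _ => by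
        rw [norm_pow, Real.norm_eq_abs]; exact pow_le_one₀ (abs_nonneg z) hz
    _ = n := by simp

noncomputable def pgf (b : ℕ → ℝ) (z : ℝ) : ℝ := ∑' n, b n * z ^ n

noncomputable def pgfDeriv (b : ℕ → ℝ) (z : ℝ) : ℝ := ∑' n, n * b n * z ^ (n - 1)

noncomputable def pgfSlope (b : ℕ → ℝ) (z : ℝ) : ℝ := ∑' n, b n * ∑ i ∈ range n, z ^ i

section pgf

variable {b : ℕ → ℝ} {μ z : ℝ}

theorem summable_pgf (hb : ∀ n, 0 ≤ b n) (h1 : Summable b) (hz : |z| ≤ 1) :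
    Summable fun n => b n * z ^ n :=
  .of_norm_bounded h1 fun n => norm_mul_pow_le (hb n) hz n

theorem pgf_one (h1 : HasSum b 1) : pgf b 1 = 1 := by
  simpa [pgf] using h1.tsum_eq

theorem pgfSlope_one (hμ : HasSum (fun n : ℕ => n * b n) μ) : pgfSlope b 1 = μ := by
  simpa [pgfSlope, mul_comm] using hμ.tsum_eq

theorem one_sub_mul_le_pgf (hb : ∀ n, 0 ≤ b n) (h1 : HasSum b 1)
    (hμ : HasSum (fun n : ℕ => n * b n) μ) (hz : |z| ≤ 1) : 1 - (1 - z) * μ ≤ pgf b z := by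
  have hle : 1 - pgf b z ≤ (1 - z) * μ := by
    refine hasSum_le (fun n => ?_) (h1.sub (summable_pgf hb h1.summable hz).hasSum)
      (hμ.mul_left (1 - z))
    have bernoulli : 1 + n * (z - 1) ≤ (1 + (z - 1)) ^ n :=
      one_add_mul_le_pow (by linarith [neg_abs_le z]) n
    rw [add_sub_cancel] at bernoulli
    nlinarith [hb n]
  linarith

theorem pgfDeriv_le (hb : ∀ n, 0 ≤ b n) (hμ : HasSum (fun n : ℕ => n * b n) μ) (hz : |z| ≤ 1) :
    pgfDeriv b z ≤ μ :=
  hasSum_le (fun n => (le_abs_self _).trans (norm_mul_pow_le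
      (mul_nonneg n.cast_nonneg (hb n)) hz (n - 1)))
    (Summable.of_norm_bounded hμ.summable fun n =>
      norm_mul_pow_le (mul_nonneg n.cast_nonneg (hb n)) hz (n - 1)).hasSum hμ

theorem hasDerivAt_pgf (hb : ∀ n, 0 ≤ b n) (h1 : Summable b)
    (hμ : Summable fun n : ℕ => n * b n) (hz : |z| < 1) :
    HasDerivAt (pgf b) (pgfDeriv b z) z :=
  hasDerivAt_tsum_of_isPreconnected hμ isOpen_Ioo (convex_Ioo (-1) 1).isPreconnected
    (fun n y _ => by simpa [mul_comm, mul_assoc] using (hasDerivAt_pow n y).const_mul (b n))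
    (fun n y hy => norm_mul_pow_le (mul_nonneg n.cast_nonneg (hb n))
      (abs_le.2 ⟨hy.1.le, hy.2.le⟩) (n - 1))
    (show (0 : ℝ) ∈ Set.Ioo (-1) 1 by norm_num) (summable_pgf hb h1 (by norm_num))
    (abs_lt.1 hz)

theorem pgf_sub_one (hb : ∀ n, 0 ≤ b n) (h1 : HasSum b 1)
    (hμ : Summable fun n : ℕ => n * b n) (hz : |z| ≤ 1) :
    pgf b z - 1 = (z - 1) * pgfSlope b z := by
  have hψ : HasSum (fun n => (z - 1) * (b n * ∑ i ∈ range n, z ^ i)) ((z - 1) * pgfSlope b z) :=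
    (Summable.of_norm_bounded hμ fun n => norm_mul_geom_sum_le (hb n) hz n).hasSum.mul_left _
  refine ((summable_pgf hb h1.summable hz).hasSum.sub h1).unique (hψ.congr_fun fun n => ?_)
  linear_combination (-b n) * geom_sum_mul z n

theorem continuousOn_pgf (hb : ∀ n, 0 ≤ b n) (h1 : Summable b) :
    ContinuousOn (pgf b) (Icc (-1) 1) :=
  continuousOn_tsum (fun n => by fun_prop) h1 fun n _ hz => norm_mul_pow_le (hb n) (abs_le.2 hz) n

theorem continuousOn_pgfSlope (hb : ∀ n, 0 ≤ b n) (hμ : Summable fun n : ℕ => n * b n) :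
    ContinuousOn (pgfSlope b) (Icc (-1) 1) :=
  continuousOn_tsum (fun n => by fun_prop) hμ
    fun n _ hz => norm_mul_geom_sum_le (hb n) (abs_le.2 hz) n

theorem hasDerivWithinAt_pgf_one (hb : ∀ n, 0 ≤ b n) (h1 : HasSum b 1)
    (hμ : HasSum (fun n : ℕ => n * b n) μ) : HasDerivWithinAt (pgf b) μ (Icc (-1) 1) 1 := by
  rw [← pgfSlope_one hμ]
  refine hasDerivWithinAt_of_sub_eq_mul (fun z hz => ?_)
    (continuousOn_pgfSlope hb hμ.summable 1 (by norm_num))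
  rw [pgf_one h1]
  exact pgf_sub_one hb h1 hμ.summable (abs_le.2 hz)

end pgf

section recurrent

variable {α μ : ℝ} {b : ℕ → ℝ}

theorem pgf_pos_of_mem_Icc (hb : ∀ n, 0 ≤ b n) (h1 : HasSum b 1)
    (hμ : HasSum (fun n : ℕ => n * b n) μ) (hα1 : α < 1) (hrec : α * μ ≤ 1 - α) {z : ℝ}
    (hz : z ∈ Icc (1 - α) 1) : 0 < pgf b z := by
  have hlow := one_sub_mul_le_pgf hb h1 hμ (abs_le.2 ⟨by linarith [hz.1], hz.2⟩)
  rcases le_total 0 μ with hμ0 | hμ0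
  · nlinarith [mul_nonneg (by linarith [hz.1] : 0 ≤ α - (1 - z)) hμ0]
  · nlinarith [hz.2]

theorem numerator_pos_of_recurrent {x p d : ℝ} (hα0 : 0 < α) (hα1 : α < 1)
    (hrec : α * μ ≤ 1 - α) (hx : x ∈ Ioo (1 - α) 1) (hp : 1 - (1 - x) * μ ≤ p) (hd : d ≤ μ) :
    0 < (1 - α) * p - (x - (1 - α)) * x * d := by
  obtain ⟨hxa, hx1⟩ := hx
  have hQ : (x - (1 - α)) ^ 2 + (1 - α) * α < α := by nlinarith
  have hμQ : μ * ((x - (1 - α)) ^ 2 + (1 - α) * α) < 1 - α := by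
    refine lt_of_mul_lt_mul_left ?_ hα0.le
    calc α * (μ * ((x - (1 - α)) ^ 2 + (1 - α) * α))
        = α * μ * ((x - (1 - α)) ^ 2 + (1 - α) * α) := by ring
      _ ≤ (1 - α) * ((x - (1 - α)) ^ 2 + (1 - α) * α) := by gcongr
      _ < (1 - α) * α := by gcongr
      _ = α * (1 - α) := by ring
  nlinarith [mul_le_mul_of_nonneg_left hd (by nlinarith : 0 ≤ (x - (1 - α)) * x),
    mul_le_mul_of_nonneg_left hp (by linarith : 0 ≤ 1 - α)]

theorem continuousOn_div_pgf (hb : ∀ n, 0 ≤ b n) (h1 : HasSum b 1)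
    (hμ : HasSum (fun n : ℕ => n * b n) μ) (hα0 : 0 < α) (hα1 : α < 1)
    (hrec : α * μ ≤ 1 - α) :
    ContinuousOn (fun z => (z - (1 - α)) / (α * z * pgf b z)) (Icc (1 - α) 1) := by
  have hsub : Icc (1 - α) 1 ⊆ Icc (-1) 1 := Icc_subset_Icc (by linarith) le_rfl
  refine (continuousOn_id.sub continuousOn_const).div
    ((continuousOn_const.mul continuousOn_id).mul ((continuousOn_pgf hb h1.summable).mono hsub))
    fun z hz => ?_
  have := pgf_pos_of_mem_Icc hb h1 hμ hα1 hrec hz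
  have : 0 < z := by linarith [hz.1]
  positivity

theorem strictMonoOn_div_pgf (hb : ∀ n, 0 ≤ b n) (h1 : HasSum b 1)
    (hμ : HasSum (fun n : ℕ => n * b n) μ) (hα0 : 0 < α) (hα1 : α < 1)
    (hrec : α * μ ≤ 1 - α) :
    StrictMonoOn (fun z => (z - (1 - α)) / (α * z * pgf b z)) (Icc (1 - α) 1) := by
  refine strictMonoOn_of_deriv_pos (convex_Icc _ _)
    (continuousOn_div_pgf hb h1 hμ hα0 hα1 hrec) fun x hx => ?_
  rw [interior_Icc] at hx
  have hx0 : 0 < x := by linarith [hx.1]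
  have hx1 : |x| < 1 := abs_lt.2 ⟨by linarith, hx.2⟩
  have hpos : 0 < α * x * pgf b x := by
    have := pgf_pos_of_mem_Icc hb h1 hμ hα1 hrec (Ioo_subset_Icc_self hx)
    positivity
  have hden : HasDerivAt (fun z => α * z * pgf b z) (α * 1 * pgf b x + α * x * pgfDeriv b x) x :=
    ((hasDerivAt_id' (x := x)).const_mul α).mul (hasDerivAt_pgf hb h1.summable hμ.summable hx1)
  rw [(((hasDerivAt_id' (x := x)).sub_const (1 - α)).fun_div hden hpos.ne').deriv]
  refine div_pos ?_ (by positivity)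
  have hnum := numerator_pos_of_recurrent hα0 hα1 hrec hx
    (one_sub_mul_le_pgf hb h1 hμ hx1.le) (pgfDeriv_le hb hμ hx1.le)
  convert mul_pos hα0 hnum using 1
  ring

theorem hasDerivWithinAt_div_pgf_one (hb : ∀ n, 0 ≤ b n) (h1 : HasSum b 1)
    (hμ : HasSum (fun n : ℕ => n * b n) μ) (hα0 : 0 < α) (hα1 : α < 1) :
    HasDerivWithinAt (fun z => (z - (1 - α)) / (α * z * pgf b z)) ((1 - α) / α - μ)
      (Icc (1 - α) 1) 1 := by
  have hpgf : HasDerivWithinAt (pgf b) μ (Icc (1 - α) 1) 1 :=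
    (hasDerivWithinAt_pgf_one hb h1 hμ).mono (Icc_subset_Icc (by linarith) le_rfl)
  have hid : HasDerivWithinAt (fun z : ℝ => z) 1 (Icc (1 - α) 1) 1 := hasDerivWithinAt_id _ _
  refine ((hid.sub_const (1 - α)).fun_div ((hid.const_mul α).mul hpgf)
    (by simp [pgf_one h1, hα0.ne'])).congr_deriv ?_
  simp only [Pi.mul_apply, pgf_one h1]
  field_simp
  ring

end recurrent

theorem stmt10_general (α : ℝ) (hα0 : 0 < α) (hα1 : α < 1)
    (b : ℕ → ℝ) (hbnn : ∀ n, 0 ≤ b n) (hbsum : HasSum b 1)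
    (μβ : ℝ) (hμβ : HasSum (fun n : ℕ => (n : ℝ) * b n) μβ)
    (hrec : μβ ≤ (1 - α) / α)
    (φβ u : ℝ → ℝ)
    (hφβ : ∀ z, φβ z = ∑' n : ℕ, b n * z ^ n)
    (hu : ∀ z, u z = (z - (1 - α)) / (α * z * φβ z)) :
    u (1 - α) = 0 ∧ u 1 = 1 ∧ StrictMonoOn u (Icc (1 - α) 1) ∧
    HasDerivWithinAt u ((1 - α) / α - μβ) (Icc (1 - α) 1) 1 ∧
    Set.BijOn u (Icc (1 - α) 1) (Icc 0 1) := by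
  obtain rfl : u = fun z => (z - (1 - α)) / (α * z * pgf b z) :=
    funext fun z => by rw [hu, hφβ, pgf]
  have hrec' : α * μβ ≤ 1 - α := by rwa [le_div_iff₀ hα0, mul_comm] at hrec
  have hleft : (1 - α) ∈ Icc (1 - α) 1 := ⟨le_rfl, by linarith⟩
  have hright : (1 : ℝ) ∈ Icc (1 - α) 1 := ⟨by linarith, le_rfl⟩
  have hu0 : (1 - α - (1 - α)) / (α * (1 - α) * pgf b (1 - α)) = 0 := by simp
  have hu1 : (1 - (1 - α)) / (α * 1 * pgf b 1) = 1 := by simp [pgf_one hbsum, hα0.ne']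
  have hmono := strictMonoOn_div_pgf hbnn hbsum hμβ hα0 hα1 hrec'
  have hsurj := (continuousOn_div_pgf hbnn hbsum hμβ hα0 hα1 hrec').surjOn_Icc hleft hright
  have hmaps := hmono.monotoneOn.mapsTo_Icc
  rw [hu0, hu1] at hsurj hmaps
  exact ⟨hu0, hu1, hmono, hasDerivWithinAt_div_pgf_one hbnn hbsum hμβ hα0 hα1,
    hmaps, hmono.injOn, hsurj⟩

/-- In the recurrent regime `μ_β ≤ μ_δ = ᾱ/α`, the function
`u(z) = (z-ᾱ)/(αzφ_β(z))` is strictly increasing on `[ᾱ,1]` with `u(ᾱ)=0`,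
`u(1)=1`, `u'(1) = μ_δ - μ_β ≥ 0`, and it is a bijection from `[ᾱ,1]` onto
`[0,1]` (hence it admits a well-defined inverse `z(u) : [0,1] → [ᾱ,1]`). -/
theorem stmt10 (α : ℝ) (hα0 : 0 < α) (hα1 : α < 1)
    (b : ℕ → ℝ) (hbnn : ∀ n, 0 ≤ b n) (hbsum : HasSum b 1)
    (hb00 : 0 < b 0) (hb01 : b 0 < 1)
    (μβ : ℝ) (hμβ : HasSum (fun n : ℕ => (n : ℝ) * b n) μβ)
    (hrec : μβ ≤ (1 - α) / α)
    (φβ u : ℝ → ℝ)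
    (hφβ : ∀ z, φβ z = ∑' n : ℕ, b n * z ^ n)
    (hu : ∀ z, u z = (z - (1 - α)) / (α * z * φβ z)) :
    u (1 - α) = 0 ∧ u 1 = 1 ∧ StrictMonoOn u (Icc (1 - α) 1) ∧
    HasDerivWithinAt u ((1 - α) / α - μβ) (Icc (1 - α) 1) 1 ∧
    Set.BijOn u (Icc (1 - α) 1) (Icc 0 1) :=
  stmt10_general α hα0 hα1 b hbnn hbsum μβ hμβ hrec φβ u hφβ hu
end

section
/- For the dual chain X_{n+1} = X_n ∧ δ_{n+1} + β_{n+1} with δ shifted geometric(α), the p.g.f.'s satisfy Φ_{n+1}(z) = φ_β(z)·(α + ᾱ(1-z)Φ_n(ᾱz))/(1 - ᾱz). In particular Φ_{n+1}(0) = b₀(α + ᾱΦ_n(0)), whence P(X_n = 0) = b₀α·(1 - (b₀ᾱ)ⁿ)/(1 - b₀ᾱ) + (b₀ᾱ)ⁿ·P(X_0 = 0), which converges to b₀α/(1 - b₀ᾱ) as n → ∞. -/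
open MeasureTheory ProbabilityTheory Set Filter

/-!
`X n` is a measurable function of `X 0` and the inputs `δ k`, `β k` with `k ≤ n`, so it is
independent of `δ (n + 1)`, and `X n ∧ δ (n + 1)` is independent of `β (n + 1)`. Hence the
p.g.f. of `X (n + 1)` is `E z^(X n ∧ δ (n + 1)) · φ_β(z)`, and integrating the first factor against
the product law `law(X n) ⊗ Geom(α)` reduces it to the geometric sum
`∑_d α ᾱ^d z^(x ∧ d) = (α + ᾱ(1 - z)(ᾱz)^x) / (1 - ᾱz)`.
At `z = 0` this is the affine recursion `p (n + 1) = b₀α + b₀ᾱ · p n` for `p n = P(X n = 0)`,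
which contracts because `b₀ᾱ < 1`.
-/

theorem hasSum_geometric_mul_pow_min {α z : ℝ} (hα0 : 0 < α) (hα1 : α ≤ 1)
    (hz : (1 - α) * z ≠ 1) (x : ℕ) :
    HasSum (fun d : ℕ => α * (1 - α) ^ d * z ^ min x d)
      ((α + (1 - α) * (1 - z) * ((1 - α) * z) ^ x) / (1 - (1 - α) * z)) := by
  -- the summand is `α (ᾱz)^d` for `d < x` and `α ᾱ^d z^x` for `d ≥ x`
  have hhead : (∑ d ∈ Finset.range x, α * (1 - α) ^ d * z ^ min x d) * ((1 - α) * z - 1)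
      = α * (((1 - α) * z) ^ x - 1) := by
    rw [← geom_sum_mul, ← mul_assoc, Finset.mul_sum]
    congr 1
    refine Finset.sum_congr rfl fun d hd => ?_
    rw [min_eq_right (Finset.mem_range.1 hd).le, mul_pow]
    ring
  have htail : HasSum (fun i : ℕ => α * (1 - α) ^ (i + x) * z ^ min x (i + x))
      (((1 - α) * z) ^ x) := by
    have hgeom := (hasSum_geometric_of_lt_one (r := 1 - α) (by linarith) (by linarith)).mul_left
      (α * ((1 - α) * z) ^ x)
    have hlimit : α * ((1 - α) * z) ^ x * (1 - (1 - α))⁻¹ = ((1 - α) * z) ^ x := by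
      rw [sub_sub_cancel]
      field_simp
    rw [hlimit] at hgeom
    refine hgeom.congr_fun fun i => ?_
    rw [min_eq_left (Nat.le_add_left x i), pow_add, mul_pow]
    ring
  refine (hasSum_nat_add_iff' x).1 ?_
  have hne : 1 - (1 - α) * z ≠ 0 := fun h => hz (by linarith)
  have hvalue : (α + (1 - α) * (1 - z) * ((1 - α) * z) ^ x) / (1 - (1 - α) * z)
      - ∑ d ∈ Finset.range x, α * (1 - α) ^ d * z ^ min x d = ((1 - α) * z) ^ x := by
    rw [sub_eq_iff_eq_add, div_eq_iff hne]
    linear_combination hhead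
  rwa [hvalue]

theorem integrable_pow_comp_of_abs_le_one {A : Type*} [MeasurableSpace A] [Countable A]
    [MeasurableSingletonClass A] (ν : Measure A) [IsFiniteMeasure ν] {z : ℝ} (hz : |z| ≤ 1)
    (e : A → ℕ) : Integrable (fun a => z ^ e a) ν :=
  .of_bound (measurable_of_countable _).aestronglyMeasurable 1 <| ae_of_all _ fun a => by
    simpa [abs_pow] using pow_le_one₀ (abs_nonneg z) hz

theorem ProbabilityTheory.IndepFun.integral_comp_prod {Ω A B : Type*} [MeasurableSpace Ω]
    {μ : Measure Ω} [IsFiniteMeasure μ] [MeasurableSpace A] [MeasurableSpace B]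
    {X : Ω → A} {Y : Ω → B}
    (hXY : IndepFun X Y μ) (hX : AEMeasurable X μ) (hY : AEMeasurable Y μ) {f : A × B → ℝ}
    (hf : Integrable f ((μ.map X).prod (μ.map Y))) :
    ∫ ω, f (X ω, Y ω) ∂μ = ∫ x, ∫ y, f (x, y) ∂(μ.map Y) ∂(μ.map X) := by
  have hmap := hXY.map_prod_eq_prod_map_map hX hY
  rw [← integral_map (hX.prodMk hY) (by rw [hmap]; exact hf.1), hmap, integral_prod _ hf]

theorem integral_map_eq_tsum_mul {Ω A : Type*} [MeasurableSpace Ω] {μ : Measure Ω}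
    [MeasurableSpace A] [Countable A] [MeasurableSingletonClass A] {Y : Ω → A} (hY : Measurable Y)
    {p : A → ℝ} (hp : ∀ a, 0 ≤ p a) (hYp : ∀ a, μ {ω | Y ω = a} = ENNReal.ofReal (p a))
    {f : A → ℝ} (hf : Integrable f (μ.map Y)) :
    ∫ a, f a ∂(μ.map Y) = ∑' a, p a * f a := by
  rw [integral_countable hf]
  refine tsum_congr fun a => ?_
  rw [map_measureReal_apply hY (measurableSet_singleton a), measureReal_def, smul_eq_mul]
  change (μ {ω | Y ω = a}).toReal * f a = _
  rw [hYp a, ENNReal.toReal_ofReal (hp a)]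

theorem integral_zero_pow_eq_toReal {Ω : Type*} [MeasurableSpace Ω] {μ : Measure Ω}
    {Y : Ω → ℕ} (hY : Measurable Y) : ∫ ω, (0 : ℝ) ^ Y ω ∂μ = (μ {ω | Y ω = 0}).toReal :=
  calc ∫ ω, (0 : ℝ) ^ Y ω ∂μ = ∫ ω, {ω | Y ω = 0}.indicator 1 ω ∂μ := by
        congr 1 with ω
        simp [zero_pow_eq, Set.indicator]
    _ = _ := integral_indicator_one (hY (measurableSet_singleton 0))

theorem integral_pow_min_of_geometric {Ω : Type*} [MeasurableSpace Ω] {μ : Measure Ω}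
    [IsProbabilityMeasure μ] {α z : ℝ} (hα0 : 0 < α) (hα1 : α ≤ 1) (hz : |z| ≤ 1)
    (hz1 : (1 - α) * z ≠ 1) {X δ : Ω → ℕ} (hX : Measurable X) (hδ : Measurable δ)
    (hXδ : IndepFun X δ μ) (hδd : ∀ d, μ {ω | δ ω = d} = ENNReal.ofReal (α * (1 - α) ^ d)) :
    ∫ ω, z ^ min (X ω) (δ ω) ∂μ =
      (α + (1 - α) * (1 - z) * ∫ ω, ((1 - α) * z) ^ X ω ∂μ) / (1 - (1 - α) * z) := by
  have hw : |(1 - α) * z| ≤ 1 := by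
    rw [abs_mul, abs_of_nonneg (by linarith)]
    nlinarith [abs_nonneg z]
  have hinner : ∀ x : ℕ, ∫ d, z ^ min x d ∂(μ.map δ) =
      (α + (1 - α) * (1 - z) * ((1 - α) * z) ^ x) / (1 - (1 - α) * z) := fun x => by
    rw [integral_map_eq_tsum_mul hδ (fun d => by positivity) hδd
      (integrable_pow_comp_of_abs_le_one _ hz _)]
    exact (hasSum_geometric_mul_pow_min hα0 hα1 hz1 x).tsum_eq
  rw [hXδ.integral_comp_prod hX.aemeasurable hδ.aemeasurable (f := fun p => z ^ min p.1 p.2)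
    (integrable_pow_comp_of_abs_le_one _ hz _)]
  have hint : Integrable (fun x : ℕ => ((1 - α) * z) ^ x) (μ.map X) :=
    integrable_pow_comp_of_abs_le_one _ hw _
  have : IsProbabilityMeasure (μ.map X) := Measure.isProbabilityMeasure_map hX.aemeasurable
  simp only [hinner]
  rw [integral_div, integral_add (integrable_const _) (hint.const_mul _), integral_const,
    integral_const_mul,
    integral_map hX.aemeasurable (measurable_of_countable _).aestronglyMeasurable]
  simp

theorem measurable_biSup_of_mem {Ω ι : Type*} {γ : ι → Type*} [∀ i, MeasurableSpace (γ i)]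
    (F : ∀ i, Ω → γ i) {S : Set ι} {i : ι} (hi : i ∈ S) :
    Measurable[⨆ i ∈ S, .comap (F i) inferInstance] (F i) :=
  (comap_measurable (F i)).mono (le_biSup (fun i => MeasurableSpace.comap (F i) inferInstance) hi)
    le_rfl

theorem Measurable.mono_biSup {Ω ι ε : Type*} [MeasurableSpace ε] {γ : ι → Type*}
    [∀ i, MeasurableSpace (γ i)] {F : ∀ i, Ω → γ i} {S T : Set ι} (hST : S ⊆ T) {Y : Ω → ε}
    (hY : Measurable[⨆ i ∈ S, .comap (F i) inferInstance] Y) :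
    Measurable[⨆ i ∈ T, .comap (F i) inferInstance] Y :=
  hY.mono (biSup_mono hST) le_rfl

theorem ProbabilityTheory.iIndepFun.indepFun_of_measurable_biSup {Ω ι ε : Type*}
    [MeasurableSpace Ω] {μ : Measure Ω} [MeasurableSpace ε] {γ : ι → Type*}
    [∀ i, MeasurableSpace (γ i)] {F : ∀ i, Ω → γ i} (hF : ∀ i, Measurable (F i))
    (h : iIndepFun F μ) {S : Set ι} {j : ι}
    (hj : j ∉ S) {Y : Ω → ε} (hY : Measurable[⨆ i ∈ S, .comap (F i) inferInstance] Y) :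
    IndepFun Y (F j) μ := by
  have hST := indep_iSup_of_disjoint (fun i => (hF i).comap_le) ((iIndepFun_iff_iIndep _ _ _).1 h)
    (Set.disjoint_singleton_right.2 hj)
  rw [IndepFun_iff_Indep]
  refine indep_of_indep_of_le_left ?_ hY.comap_le
  simpa using hST

section DualChain

variable {Ω : Type*} {δ β X : ℕ → Ω → ℕ}

def dualChainInputs (X₀ : Ω → ℕ) (δ β : ℕ → Ω → ℕ) (i : Option (ℕ ⊕ ℕ)) : Ω → ℕ :=
  Option.elim i X₀ (Sum.elim δ β)

def stage : Option (ℕ ⊕ ℕ) → ℕ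
  | none => 0
  | some (.inl k) => k
  | some (.inr k) => k

theorem measurable_dualChainInputs [MeasurableSpace Ω] (hmX₀ : Measurable (X 0))
    (hmδ : ∀ n, Measurable (δ n)) (hmβ : ∀ n, Measurable (β n)) :
    ∀ i, Measurable (dualChainInputs (X 0) δ β i)
  | none => hmX₀
  | some (.inl k) => hmδ k
  | some (.inr k) => hmβ k

theorem measurable_biSup_stage_le
    (hXrec : ∀ n ω, X (n + 1) ω = min (X n ω) (δ (n + 1) ω) + β (n + 1) ω) (n : ℕ) :
    Measurable[⨆ i ∈ {i | stage i ≤ n}, .comap (dualChainInputs (X 0) δ β i) inferInstance]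
      (X n) := by
  induction n with
  | zero => exact measurable_biSup_of_mem (dualChainInputs (X 0) δ β) (i := none) (by simp [stage])
  | succ n ih =>
    have hX := ih.mono_biSup (T := {i | stage i ≤ n + 1}) fun i hi => Nat.le_succ_of_le hi
    have hδ := measurable_biSup_of_mem (dualChainInputs (X 0) δ β)
      (S := {i | stage i ≤ n + 1}) (i := some (.inl (n + 1))) (by simp [stage])
    have hβ := measurable_biSup_of_mem (dualChainInputs (X 0) δ β)
      (S := {i | stage i ≤ n + 1}) (i := some (.inr (n + 1))) (by simp [stage])
    rw [funext (hXrec n)]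
    exact (measurable_of_countable fun p : ℕ × ℕ × ℕ => min p.1 p.2.1 + p.2.2).comp
      (hX.prodMk (hδ.prodMk hβ))

theorem indepFun_dualChain_delta [MeasurableSpace Ω] {μ : Measure Ω}
    (hmX₀ : Measurable (X 0)) (hmδ : ∀ n, Measurable (δ n)) (hmβ : ∀ n, Measurable (β n))
    (hXrec : ∀ n ω, X (n + 1) ω = min (X n ω) (δ (n + 1) ω) + β (n + 1) ω)
    (hindep : iIndepFun (dualChainInputs (X 0) δ β) μ) (n : ℕ) :
    IndepFun (X n) (δ (n + 1)) μ :=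
  hindep.indepFun_of_measurable_biSup (measurable_dualChainInputs hmX₀ hmδ hmβ)
    (j := some (.inl (n + 1))) (by simp [stage]) (measurable_biSup_stage_le hXrec n)

theorem indepFun_dualChain_min_beta [MeasurableSpace Ω] {μ : Measure Ω}
    (hmX₀ : Measurable (X 0)) (hmδ : ∀ n, Measurable (δ n)) (hmβ : ∀ n, Measurable (β n))
    (hXrec : ∀ n ω, X (n + 1) ω = min (X n ω) (δ (n + 1) ω) + β (n + 1) ω)
    (hindep : iIndepFun (dualChainInputs (X 0) δ β) μ) (n : ℕ) :
    IndepFun (fun ω => min (X n ω) (δ (n + 1) ω)) (β (n + 1)) μ := by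
  let S : Set (Option (ℕ ⊕ ℕ)) := {some (.inr (n + 1))}ᶜ
  have hX := (measurable_biSup_stage_le hXrec n).mono_biSup (T := S) fun i hi h => by
    subst h
    simp [stage] at hi
  have hδ := measurable_biSup_of_mem (dualChainInputs (X 0) δ β) (S := S)
    (i := some (.inl (n + 1))) (by simp [S])
  exact hindep.indepFun_of_measurable_biSup (measurable_dualChainInputs hmX₀ hmδ hmβ)
    (j := some (.inr (n + 1))) (by simp [S]) (hX.min hδ)

theorem integral_pow_dualChain_succ [MeasurableSpace Ω] {μ : Measure Ω} [IsProbabilityMeasure μ]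
    {α : ℝ} (hα0 : 0 < α) (hα1 : α ≤ 1) {b : ℕ → ℝ} (hbnn : ∀ n, 0 ≤ b n)
    (hmδ : ∀ n, Measurable (δ n)) (hmβ : ∀ n, Measurable (β n)) (hmX : ∀ n, Measurable (X n))
    (hXrec : ∀ n ω, X (n + 1) ω = min (X n ω) (δ (n + 1) ω) + β (n + 1) ω)
    (hδd : ∀ n x, μ {ω | δ n ω = x} = ENNReal.ofReal (α * (1 - α) ^ x))
    (hβd : ∀ n x, μ {ω | β n ω = x} = ENNReal.ofReal (b x))
    (hindep : iIndepFun (dualChainInputs (X 0) δ β) μ) (n : ℕ) {z : ℝ} (hz : |z| ≤ 1)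
    (hz1 : (1 - α) * z ≠ 1) :
    ∫ ω, z ^ X (n + 1) ω ∂μ =
      (∑' k : ℕ, b k * z ^ k) *
        (α + (1 - α) * (1 - z) * ∫ ω, ((1 - α) * z) ^ X n ω ∂μ) / (1 - (1 - α) * z) := by
  have hmin : Measurable fun ω => min (X n ω) (δ (n + 1) ω) := (hmX n).min (hmδ (n + 1))
  have hβ : ∫ ω, z ^ β (n + 1) ω ∂μ = ∑' k : ℕ, b k * z ^ k := by
    rw [← integral_map (hmβ (n + 1)).aemeasurable (measurable_of_countable _).aestronglyMeasurable,
      integral_map_eq_tsum_mul (hmβ (n + 1)) hbnn (hβd (n + 1))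
        (integrable_pow_comp_of_abs_le_one _ hz _)]
  calc ∫ ω, z ^ X (n + 1) ω ∂μ
      = ∫ ω, z ^ min (X n ω) (δ (n + 1) ω) * z ^ β (n + 1) ω ∂μ := by
        simp only [hXrec, pow_add]
    _ = (∫ ω, z ^ min (X n ω) (δ (n + 1) ω) ∂μ) * ∫ ω, z ^ β (n + 1) ω ∂μ :=
        (indepFun_dualChain_min_beta (hmX 0) hmδ hmβ hXrec hindep n).integral_comp_mul_comp
          hmin.aemeasurable (hmβ (n + 1)).aemeasurable
          (measurable_of_countable _).aestronglyMeasurable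
          (measurable_of_countable _).aestronglyMeasurable
    _ = _ := by
        rw [hβ, integral_pow_min_of_geometric hα0 hα1 hz hz1 (hmX n) (hmδ (n + 1))
          (indepFun_dualChain_delta (hmX 0) hmδ hmβ hXrec hindep n) (hδd (n + 1))]
        ring

end DualChain

theorem eq_of_affine_recurrence {u : ℕ → ℝ} {a q : ℝ} (hq : q ≠ 1)
    (hu : ∀ n, u (n + 1) = a + q * u n) (n : ℕ) :
    u n = a * (1 - q ^ n) / (1 - q) + q ^ n * u 0 := by
  have : 1 - q ≠ 0 := sub_ne_zero.2 (Ne.symm hq)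
  induction n with
  | zero => simp
  | succ n ih =>
    rw [hu n, ih]
    field_simp
    ring

theorem tendsto_of_affine_recurrence {u : ℕ → ℝ} {a q : ℝ} (hq : |q| < 1)
    (hu : ∀ n, u (n + 1) = a + q * u n) : Tendsto u atTop (nhds (a / (1 - q))) := by
  have hpow := tendsto_pow_atTop_nhds_zero_of_abs_lt_one hq
  have hlim := ((hpow.const_sub 1).const_mul a |>.div_const (1 - q)).add (hpow.mul_const (u 0))
  rw [funext (eq_of_affine_recurrence (fun h => by simp [h] at hq) hu)]
  simpa using hlim

theorem stmt16_general {Ω : Type*} [MeasurableSpace Ω] (μ : Measure Ω) [IsProbabilityMeasure μ]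
    (α : ℝ) (hα0 : 0 < α) (hα1 : α < 1)
    (b : ℕ → ℝ) (hbnn : ∀ n, 0 ≤ b n)
    (hb01 : b 0 < 1)
    (δ β : ℕ → Ω → ℕ) (X : ℕ → Ω → ℕ)
    (hmδ : ∀ n, Measurable (δ n)) (hmβ : ∀ n, Measurable (β n)) (hmX : ∀ n, Measurable (X n))
    (hXrec : ∀ n ω, X (n + 1) ω = min (X n ω) (δ (n + 1) ω) + β (n + 1) ω)
    (hδd : ∀ n x, μ {ω | δ n ω = x} = ENNReal.ofReal (α * (1 - α) ^ x))
    (hβd : ∀ n x, μ {ω | β n ω = x} = ENNReal.ofReal (b x))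
    (hindep : iIndepFun
      (fun i : Option (ℕ ⊕ ℕ) => Option.elim i (X 0) (Sum.elim δ β)) μ) :
    (∀ (n : ℕ) (z : ℝ), |z| ≤ 1 → (1 - α) * z ≠ 1 →
      ∫ ω, z ^ X (n + 1) ω ∂μ =
        (∑' k : ℕ, b k * z ^ k) *
          (α + (1 - α) * (1 - z) * ∫ ω, ((1 - α) * z) ^ X n ω ∂μ) / (1 - (1 - α) * z)) ∧
    (∀ n : ℕ, (μ {ω | X n ω = 0}).toReal =
      b 0 * α * (1 - (b 0 * (1 - α)) ^ n) / (1 - b 0 * (1 - α)) +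
        (b 0 * (1 - α)) ^ n * (μ {ω | X 0 ω = 0}).toReal) ∧
    Tendsto (fun n : ℕ => (μ {ω | X n ω = 0}).toReal) atTop
      (nhds (b 0 * α / (1 - b 0 * (1 - α)))) := by
  have hpgf n z (hz : |z| ≤ 1) (hz1 : (1 - α) * z ≠ 1) :=
    integral_pow_dualChain_succ hα0 hα1.le hbnn hmδ hmβ hmX hXrec hδd hβd hindep n hz hz1
  have hzero : ∀ n, (μ {ω | X (n + 1) ω = 0}).toReal =
      b 0 * α + b 0 * (1 - α) * (μ {ω | X n ω = 0}).toReal := fun n => by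
    have h := hpgf n 0 (by simp) (by simp)
    rw [integral_zero_pow_eq_toReal (hmX _), mul_zero, integral_zero_pow_eq_toReal (hmX _),
      tsum_eq_single 0 fun k hk => by simp [hk]] at h
    rw [h]
    ring
  have hq : |b 0 * (1 - α)| < 1 := by
    rw [abs_of_nonneg (mul_nonneg (hbnn 0) (by linarith))]
    exact mul_lt_one_of_nonneg_of_lt_one_left (hbnn 0) hb01 (by linarith)
  exact ⟨hpgf, eq_of_affine_recurrence (ne_of_lt (lt_of_abs_lt hq)) hzero,
    tendsto_of_affine_recurrence hq hzero⟩

/-- Dual chain `X_{n+1} = X_n ∧ δ_{n+1} + β_{n+1}` with `δ` shifted geometric(α):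
the p.g.f.'s satisfy `Φ_{n+1}(z) = φ_β(z)(α + ᾱ(1-z)Φ_n(ᾱz))/(1-ᾱz)`; in
particular `P(X_n = 0) = b₀α(1-(b₀ᾱ)ⁿ)/(1-b₀ᾱ) + (b₀ᾱ)ⁿ P(X_0 = 0)`, which
converges to `b₀α/(1-b₀ᾱ)`. -/
theorem stmt16 {Ω : Type*} [MeasurableSpace Ω] (μ : Measure Ω) [IsProbabilityMeasure μ]
    (α : ℝ) (hα0 : 0 < α) (hα1 : α < 1)
    (b : ℕ → ℝ) (hbnn : ∀ n, 0 ≤ b n) (hbsum : HasSum b 1)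
    (hb00 : 0 < b 0) (hb01 : b 0 < 1)
    (δ β : ℕ → Ω → ℕ) (X : ℕ → Ω → ℕ)
    (hmδ : ∀ n, Measurable (δ n)) (hmβ : ∀ n, Measurable (β n)) (hmX : ∀ n, Measurable (X n))
    (hXrec : ∀ n ω, X (n + 1) ω = min (X n ω) (δ (n + 1) ω) + β (n + 1) ω)
    (hδd : ∀ n x, μ {ω | δ n ω = x} = ENNReal.ofReal (α * (1 - α) ^ x))
    (hβd : ∀ n x, μ {ω | β n ω = x} = ENNReal.ofReal (b x))
    (hindep : iIndepFun
      (fun i : Option (ℕ ⊕ ℕ) => Option.elim i (X 0) (Sum.elim δ β)) μ) :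
    (∀ (n : ℕ) (z : ℝ), |z| ≤ 1 → (1 - α) * z ≠ 1 →
      ∫ ω, z ^ X (n + 1) ω ∂μ =
        (∑' k : ℕ, b k * z ^ k) *
          (α + (1 - α) * (1 - z) * ∫ ω, ((1 - α) * z) ^ X n ω ∂μ) / (1 - (1 - α) * z)) ∧
    (∀ n : ℕ, (μ {ω | X n ω = 0}).toReal =
      b 0 * α * (1 - (b 0 * (1 - α)) ^ n) / (1 - b 0 * (1 - α)) +
        (b 0 * (1 - α)) ^ n * (μ {ω | X 0 ω = 0}).toReal) ∧
    Tendsto (fun n : ℕ => (μ {ω | X n ω = 0}).toReal) atTop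
      (nhds (b 0 * α / (1 - b 0 * (1 - α)))) :=
  stmt16_general μ α hα0 hα1 b hbnn hb01 δ β X hmδ hmβ hmX hXrec hδd hβd hindep
end

section
/- If φ_β(z) = b₀ + (1-b₀)·αz/(1 - ᾱz) with b₀ = 1/(1+ᾱ) (a zero-inflated geometric input), then Φ_∞(z) = α/(1 - ᾱz) solves the stationary equation Φ_∞(z) = φ_β(z)·(α + ᾱ(1-z)Φ_∞(ᾱz))/(1 - ᾱz) of the dual chain X_{n+1} = X_n ∧ δ_{n+1} + β_{n+1}; i.e., the stationary law is geometric with failure parameter α and mean ᾱ/α. -/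
open Set

/-!
The input p.g.f. factors as `φ_β(z) = (1 - ᾱ²z) / ((1 + ᾱ)(1 - ᾱz))`, while for `Φ(z) = α/(1 - ᾱz)`
the bracket of the stationary equation is `α + ᾱ(1 - z)Φ(ᾱz) = α(1 + ᾱ)(1 - ᾱz) / (1 - ᾱ²z)`.
Their product is `α`, so the right-hand side collapses to `α / (1 - ᾱz) = Φ(z)`. The series and
the mean are the geometric series `∑ α (ᾱz)ⁿ` and its derivative `∑ n α ᾱⁿ = αᾱ/(1 - ᾱ)²`.
-/

section Algebra

variable {K : Type*} [Field K] {α z : K}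

theorem zeroInflatedGeometric_pgf_eq (hα : 1 + (1 - α) ≠ 0) (hz : 1 - (1 - α) * z ≠ 0) :
    1 / (1 + (1 - α)) + (1 - 1 / (1 + (1 - α))) * (α * z / (1 - (1 - α) * z)) =
      (1 - (1 - α) ^ 2 * z) / ((1 + (1 - α)) * (1 - (1 - α) * z)) := by
  field_simp
  ring

theorem geometric_stationary_bracket_eq (hz : 1 - (1 - α) ^ 2 * z ≠ 0) :
    α + (1 - α) * (1 - z) * (α / (1 - (1 - α) * ((1 - α) * z))) =
      α * (1 + (1 - α)) * (1 - (1 - α) * z) / (1 - (1 - α) ^ 2 * z) := by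
  rw [← mul_assoc, ← sq]
  field_simp
  ring

end Algebra

section Series

variable {K : Type*} [NormedField K]

theorem hasSum_mul_geometric_pgf (c : K) {r z : K} (h : ‖r * z‖ < 1) :
    HasSum (fun n : ℕ => c * r ^ n * z ^ n) (c / (1 - r * z)) := by
  simpa only [mul_assoc, mul_pow, div_eq_mul_inv] using
    (hasSum_geometric_of_norm_lt_one h).mul_left c

theorem hasSum_coe_mul_geometric_pmf {r : K} (h : ‖r‖ < 1) :
    HasSum (fun n : ℕ => (n : K) * ((1 - r) * r ^ n)) (r / (1 - r)) := by
  have hr : 1 - r ≠ 0 := sub_ne_zero.mpr (by rintro rfl; simp at h)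
  have hsum : (1 - r) * (r / (1 - r) ^ 2) = r / (1 - r) := by
    field_simp
  simpa only [hsum, mul_left_comm] using
    (hasSum_coe_mul_geometric_of_norm_lt_one h).mul_left (1 - r)

end Series

/-- For the dual chain, if `φ_β(z) = b₀ + (1-b₀)αz/(1-ᾱz)` with `b₀ = 1/(1+ᾱ)`
(zero-inflated geometric input), then `Φ_∞(z) = α/(1-ᾱz)` solves the stationary
functional equation `Φ_∞(z) = φ_β(z)(α + ᾱ(1-z)Φ_∞(ᾱz))/(1-ᾱz)`; i.e. the
stationary law is geometric with failure parameter `α` and mean `ᾱ/α`. -/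
theorem stmt19 (α b₀ : ℝ) (hα0 : 0 < α) (hα1 : α < 1)
    (hb₀ : b₀ = 1 / (1 + (1 - α)))
    (φβ Φ : ℝ → ℝ)
    (hφβ : ∀ z, φβ z = b₀ + (1 - b₀) * (α * z / (1 - (1 - α) * z)))
    (hΦ : ∀ z, Φ z = α / (1 - (1 - α) * z)) :
    (∀ z : ℝ, (1 - α) * z ≠ 1 → (1 - α) ^ 2 * z ≠ 1 →
      Φ z = φβ z * (α + (1 - α) * (1 - z) * Φ ((1 - α) * z)) / (1 - (1 - α) * z)) ∧
    (∀ z ∈ Icc (0 : ℝ) 1, HasSum (fun n : ℕ => α * (1 - α) ^ n * z ^ n) (Φ z)) ∧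
    HasSum (fun n : ℕ => (n : ℝ) * (α * (1 - α) ^ n)) ((1 - α) / α) := by
  refine ⟨fun z h₁ h₂ => ?_, fun z ⟨hz0, hz1⟩ => ?_, ?_⟩
  · have hα : 1 + (1 - α) ≠ 0 := by linarith
    have h₁' : 1 - (1 - α) * z ≠ 0 := sub_ne_zero.mpr h₁.symm
    have h₂' : 1 - (1 - α) ^ 2 * z ≠ 0 := sub_ne_zero.mpr h₂.symm
    rw [hφβ, hb₀, hΦ, hΦ, zeroInflatedGeometric_pgf_eq hα h₁',
      geometric_stationary_bracket_eq h₂']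
    field_simp
  · have h : ‖(1 - α) * z‖ < 1 := by
      rw [Real.norm_of_nonneg (by nlinarith)]
      nlinarith
    exact hΦ z ▸ hasSum_mul_geometric_pgf α h
  · have h : ‖1 - α‖ < 1 := by
      rw [Real.norm_of_nonneg (by linarith)]
      linarith
    simpa using hasSum_coe_mul_geometric_pmf h
end
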